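/- Let x = (a b; c d) ∈ SL2(F). If v(b) < v(a) and v(b) < v(d), then x ∈ I · (0, b; -b^{-1}, 0) · I. -/

import Mathlib

noncomputable section

/-- The 2-dimensional local field `F = 𝔽_q((t1))((t2))` (iterated Laurent series). -/
abbrev F2 (Fq : Type) [Field Fq] : Type := LaurentSeries (LaurentSeries Fq)

variable (Fq : Type) [Field Fq] [Fintype Fq]

/-- The local parameter `t1`. -/
def t1 : F2 Fq := HahnSeries.single 0 (HahnSeries.single 1 1)

/-- The local parameter `t2`. -/
def t2 : F2 Fq := HahnSeries.single 1 1

/-- The rank-two valuation `v(x) = (v1 x, v2 x)` of a nonzero `x` (junk value at `0`):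
`v2 x` is the `t2`-adic order of `x`, and `v1 x` is the `t1`-adic order of the leading
`t2`-coefficient of `x`. -/
def vv (x : F2 Fq) : ℤ × ℤ := ((x.coeff x.order).order, x.order)

/-- The lexicographic-from-the-right (non-strict) order on `ℤ²`. -/
def lexle (a b : ℤ × ℤ) : Prop := a.2 < b.2 ∨ (a.2 = b.2 ∧ a.1 ≤ b.1)

/-- The lexicographic-from-the-right strict order on `ℤ²`. -/
def lexlt (a b : ℤ × ℤ) : Prop := a.2 < b.2 ∨ (a.2 = b.2 ∧ a.1 < b.1)

/-- `v(x) ≤ v(y)`, with the convention `v(0) = ∞`. -/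
def vle (x y : F2 Fq) : Prop := x ≠ 0 ∧ (y = 0 ∨ lexle (vv Fq x) (vv Fq y))

/-- `v(x) < v(y)`, with the convention `v(0) = ∞`. -/
def vlt (x y : F2 Fq) : Prop := x ≠ 0 ∧ (y = 0 ∨ lexlt (vv Fq x) (vv Fq y))

/-- The rank-two valuation ring `O` of `F`. -/
def Oring : Set (F2 Fq) := {x | x = 0 ∨ lexle (0, 0) (vv Fq x)}

/-- `SL₂(F)` as the set of 2×2 matrices of determinant 1. -/
def SL2 : Set (Matrix (Fin 2) (Fin 2) (F2 Fq)) := {g | g.det = 1}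

/-- The (double) Iwahori subgroup `I ⊆ SL₂(O)`: entries in `O`, lower-left entry in `t1·O`. -/
def Iwahori : Set (Matrix (Fin 2) (Fin 2) (F2 Fq)) :=
  {g | g.det = 1 ∧ (∀ i j, g i j ∈ Oring Fq) ∧ ∃ y ∈ Oring Fq, g 1 0 = t1 Fq * y}

/-- The matrix `η^{(1)}_{i,j} = diag(t1^i t2^j, t1^{-i} t2^{-j})`. -/
def eta1 (i j : ℤ) : Matrix (Fin 2) (Fin 2) (F2 Fq) :=
  !![t1 Fq ^ i * t2 Fq ^ j, 0; 0, t1 Fq ^ (-i) * t2 Fq ^ (-j)]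

/-- The matrix `η^{(2)}_{i,j} = (0, t1^i t2^j; -t1^{-i} t2^{-j}, 0)`. -/
def eta2 (i j : ℤ) : Matrix (Fin 2) (Fin 2) (F2 Fq) :=
  !![0, t1 Fq ^ i * t2 Fq ^ j; -(t1 Fq ^ (-i) * t2 Fq ^ (-j)), 0]

/-- The double coset `I·η·I`. -/
def doubleCoset (η : Matrix (Fin 2) (Fin 2) (F2 Fq)) : Set (Matrix (Fin 2) (Fin 2) (F2 Fq)) :=
  {x | ∃ g ∈ Iwahori Fq, ∃ h ∈ Iwahori Fq, x = g * η * h}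

/-- The right coset `I·z`. -/
def rcoset (z : Matrix (Fin 2) (Fin 2) (F2 Fq)) : Set (Matrix (Fin 2) (Fin 2) (F2 Fq)) :=
  {x | ∃ g ∈ Iwahori Fq, x = g * z}
section Aux

variable {Fq}

lemma vv_mul (x y : F2 Fq) (hx : x ≠ 0) (hy : y ≠ 0) :
    vv Fq (x * y) = vv Fq x + vv Fq y := by
  have hc : ∀ z : F2 Fq, z ≠ 0 → z.coeff z.order ≠ 0 := fun z hz =>
    HahnSeries.coeff_order_eq_zero.not.mpr hz
  unfold vv
  rw [HahnSeries.order_mul hx hy, HahnSeries.coeff_mul_order_add_order x y,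
    HahnSeries.leadingCoeff_eq, HahnSeries.leadingCoeff_eq,
    HahnSeries.order_mul (hc x hx) (hc y hy), Prod.mk_add_mk]

lemma t1_ne_zero : t1 Fq ≠ 0 :=
  HahnSeries.single_ne_zero (HahnSeries.single_ne_zero one_ne_zero)

lemma vv_t1 : vv Fq (t1 Fq) = (1, 0) := by
  unfold vv t1
  rw [HahnSeries.order_single (HahnSeries.single_ne_zero one_ne_zero),
    HahnSeries.coeff_single_same, HahnSeries.order_single (one_ne_zero)]

lemma vv_one : vv Fq (1 : F2 Fq) = (0, 0) := by
  unfold vv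
  rw [HahnSeries.order_one, ← HahnSeries.single_zero_one (Γ := ℤ) (R := LaurentSeries Fq),
    HahnSeries.coeff_single_same, HahnSeries.order_one]

lemma vv_inv (x : F2 Fq) (hx : x ≠ 0) : vv Fq x⁻¹ = -vv Fq x := by
  have h := vv_mul x x⁻¹ hx (inv_ne_zero (G₀ := F2 Fq) hx)
  rw [mul_inv_cancel₀ (G₀ := F2 Fq) hx, vv_one] at h
  have h0 : vv Fq x + vv Fq x⁻¹ = 0 := by rw [← h]; rfl
  exact eq_neg_of_add_eq_zero_right h0

lemma div_key (b y : F2 Fq) (hb : b ≠ 0) (h : y = 0 ∨ lexlt (vv Fq b) (vv Fq y)) :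
    (∃ z ∈ Oring Fq, y / b = t1 Fq * z) ∧ y / b ∈ Oring Fq := by
  by_cases hy : y = 0
  · subst hy
    refine ⟨⟨0, Or.inl rfl, by ring⟩, Or.inl (by ring)⟩
  have h : lexlt (vv Fq b) (vv Fq y) := h.resolve_left hy
  have h' : (vv Fq b).2 < (vv Fq y).2 ∨
      ((vv Fq b).2 = (vv Fq y).2 ∧ (vv Fq b).1 < (vv Fq y).1) := h
  have ht1 : (t1 Fq : F2 Fq) ≠ 0 := t1_ne_zero
  have hbi : (b⁻¹ : F2 Fq) ≠ 0 := inv_ne_zero (G₀ := F2 Fq) hb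
  have hti : ((t1 Fq)⁻¹ : F2 Fq) ≠ 0 := inv_ne_zero (G₀ := F2 Fq) ht1
  have hz : vv Fq (y * b⁻¹ * (t1 Fq)⁻¹) = vv Fq y + -vv Fq b + -(1, 0) := by
    rw [vv_mul (y * b⁻¹) (t1 Fq)⁻¹ (mul_ne_zero hy hbi) hti,
      vv_mul y b⁻¹ hy hbi, vv_inv b hb, vv_inv (t1 Fq) ht1, vv_t1]
  have hdb : vv Fq (y * b⁻¹) = vv Fq y + -vv Fq b := by
    rw [vv_mul y b⁻¹ hy hbi, vv_inv b hb]
  have htt : t1 Fq * (t1 Fq)⁻¹ = 1 := mul_inv_cancel₀ (G₀ := F2 Fq) ht1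
  refine ⟨⟨y * b⁻¹ * (t1 Fq)⁻¹, ?_, ?_⟩, ?_⟩
  · show y * b⁻¹ * (t1 Fq)⁻¹ = 0 ∨ lexle (0, 0) (vv Fq (y * b⁻¹ * (t1 Fq)⁻¹))
    right
    rw [hz]
    change (0:ℤ) < (vv Fq y).2 + -(vv Fq b).2 + -0 ∨
      ((0:ℤ) = (vv Fq y).2 + -(vv Fq b).2 + -0 ∧
        (0:ℤ) ≤ (vv Fq y).1 + -(vv Fq b).1 + -1)
    omega
  · have e1 : t1 Fq * (y * b⁻¹ * (t1 Fq)⁻¹) = y * b⁻¹ * (t1 Fq * (t1 Fq)⁻¹) := by ring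
    have e2 : y / b = y * b⁻¹ := rfl
    rw [e2, e1, htt, mul_one (y * b⁻¹)]
  · show y / b = 0 ∨ lexle (0, 0) (vv Fq (y / b))
    right
    have e2 : y / b = y * b⁻¹ := rfl
    rw [e2, hdb]
    change (0:ℤ) < (vv Fq y).2 + -(vv Fq b).2 ∨
      ((0:ℤ) = (vv Fq y).2 + -(vv Fq b).2 ∧
        (0:ℤ) ≤ (vv Fq y).1 + -(vv Fq b).1)
    omega

lemma one_mem_Oring : (1 : F2 Fq) ∈ Oring Fq := by
  right
  rw [vv_one]
  exact Or.inr ⟨rfl, le_refl _⟩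

lemma lower_mem (u : F2 Fq) (hz : ∃ z ∈ Oring Fq, u = t1 Fq * z) (hu : u ∈ Oring Fq) :
    (!![1, 0; u, 1] : Matrix (Fin 2) (Fin 2) (F2 Fq)) ∈ Iwahori Fq := by
  refine ⟨by rw [Matrix.det_fin_two_of]; ring, ?_, ?_⟩
  · intro i j
    fin_cases i <;> fin_cases j
    · exact one_mem_Oring
    · exact Or.inl rfl
    · exact hu
    · exact one_mem_Oring
  · obtain ⟨z, hz1, hz2⟩ := hz
    exact ⟨z, hz1, hz2⟩

end Aux

/-- Lemma 1.2(2): if `v(b) < v(a)` and `v(b) < v(d)`, then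
`(a b; c d) ∈ I·(0, b; -b⁻¹, 0)·I`. -/
theorem case_antidiag_b (Fq : Type) [Field Fq] [Fintype Fq] (a b c d : F2 Fq)
    (hx : (!![a, b; c, d] : Matrix (Fin 2) (Fin 2) (F2 Fq)).det = 1)
    (hba : vlt Fq b a) (hbd : vlt Fq b d) :
    (!![a, b; c, d] : Matrix (Fin 2) (Fin 2) (F2 Fq)) ∈
      doubleCoset Fq !![0, b; -b⁻¹, 0] := by
  have hb : b ≠ 0 := hba.1
  rw [Matrix.det_fin_two_of] at hx
  have hbi : b * b⁻¹ = 1 := mul_inv_cancel₀ (G₀ := F2 Fq) hb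
  obtain ⟨hd1, hd2⟩ := div_key b d hb hbd.2
  obtain ⟨ha1, ha2⟩ := div_key b a hb hba.2
  refine ⟨!![1, 0; d / b, 1], lower_mem _ hd1 hd2, !![1, 0; a / b, 1],
    lower_mem _ ha1 ha2, ?_⟩
  rw [Matrix.mul_fin_two, Matrix.mul_fin_two]
  have h00 : (1 * 0 + 0 * -b⁻¹) * 1 + (1 * b + 0 * 0) * (a / b) = a := by
    rw [show (1 * 0 + 0 * -b⁻¹) * 1 + (1 * b + 0 * 0) * (a / b) = a * (b * b⁻¹) from by ring,
      hbi, mul_one a]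
  have h01 : (1 * 0 + 0 * -b⁻¹) * 0 + (1 * b + 0 * 0) * 1 = b := by ring
  have h10 : (d / b * 0 + 1 * -b⁻¹) * 1 + (d / b * b + 1 * 0) * (a / b) = c := by
    rw [show (d / b * 0 + 1 * -b⁻¹) * 1 + (d / b * b + 1 * 0) * (a / b)
        = (a * d * (b * b⁻¹) - 1) * b⁻¹ from by ring, hbi, mul_one (a * d), ← hx]
    rw [show (a * d - (a * d - b * c)) * b⁻¹ = c * (b * b⁻¹) from by ring, hbi, mul_one c]
  have h11 : (d / b * 0 + 1 * -b⁻¹) * 0 + (d / b * b + 1 * 0) * 1 = d := by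
    rw [show (d / b * 0 + 1 * -b⁻¹) * 0 + (d / b * b + 1 * 0) * 1 = d * (b * b⁻¹) from by ring,
      hbi, mul_one d]
  rw [h00, h01, h10, h11]
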